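/- Under the same setup (p supported on two indices i₁, i₂ with positive components summing to 1), γ(p) + γ(Tp) = λ_{i₁} + λ_{i₂}. -/

import Mathlib

open Finset

noncomputable def gam {n : ℕ} (lam : Fin (n+1) → ℝ) (Psi : ℝ → ℝ) (p : Fin (n+1) → ℝ) : ℝ :=
  (∑ i, Psi (lam i) * lam i * p i) / (∑ i, Psi (lam i) * p i)

noncomputable def Tmap {n : ℕ} (lam : Fin (n+1) → ℝ) (Psi : ℝ → ℝ) (p : Fin (n+1) → ℝ) :
    Fin (n+1) → ℝ :=
  fun i => (lam i - gam lam Psi p) ^ 2 * p i / ∑ j, (lam j - gam lam Psi p) ^ 2 * p j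

noncomputable def Theta {n : ℕ} (lam : Fin (n+1) → ℝ) (Psi : ℝ → ℝ) (p : Fin (n+1) → ℝ) : ℝ :=
  (∑ i, Psi (lam i) * (lam i - gam lam Psi p) ^ 2 * p i) / (∑ i, Psi (lam i) * p i)

/-!
With weights `a = Ψ(λ₁) p₁`, `b = Ψ(λ₂) p₂`, `γ(p) = (a λ₁ + b λ₂)/(a + b)`, so
`λ₁ - γ(p) ∝ b` and `λ₂ - γ(p) ∝ a`. Hence `Tp` carries the weights `a b²` and `b a²`, i.e.
`γ(Tp) = (b λ₁ + a λ₂)/(a + b)`: the weights of `γ(p)` are swapped, and the two means add up to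
`λ₁ + λ₂`. Since `γ` is homogeneous of degree zero in `p`, the normalisation in `T` plays no role.
-/

section TwoPointMean

variable {a b x y m : ℝ}

lemma sub_twoPointMean_left (hab : a + b ≠ 0) (hm : m = (a * x + b * y) / (a + b)) :
    x - m = b * (x - y) / (a + b) := by
  subst hm; field_simp; ring

lemma sub_twoPointMean_right (hab : a + b ≠ 0) (hm : m = (a * x + b * y) / (a + b)) :
    y - m = a * (y - x) / (a + b) := by
  subst hm; field_simp; ring

lemma twoPointMean_of_sq_dev_weights (ha : a ≠ 0) (hb : b ≠ 0) (hab : a + b ≠ 0) (hxy : x ≠ y)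
    (hm : m = (a * x + b * y) / (a + b)) :
    (a * (x - m) ^ 2 * x + b * (y - m) ^ 2 * y) / (a * (x - m) ^ 2 + b * (y - m) ^ 2)
      = x + y - m := by
  have hxy' : x - y ≠ 0 := sub_ne_zero.mpr hxy
  have hden : a * (x - m) ^ 2 + b * (y - m) ^ 2 = a * b * (x - y) ^ 2 / (a + b) := by
    rw [sub_twoPointMean_left hab hm, sub_twoPointMean_right hab hm]
    field_simp
    ring
  rw [div_eq_iff (by rw [hden]; positivity), sub_twoPointMean_left hab hm,
    sub_twoPointMean_right hab hm, hm]
  field_simp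
  ring

end TwoPointMean

section Gam

variable {n : ℕ} (lam : Fin (n+1) → ℝ) (Psi : ℝ → ℝ)

lemma gam_smul {c : ℝ} (hc : c ≠ 0) (p : Fin (n+1) → ℝ) :
    gam lam Psi (c • p) = gam lam Psi p := by
  simp only [gam, Pi.smul_apply, smul_eq_mul, mul_left_comm _ c, ← Finset.mul_sum]
  exact mul_div_mul_left _ _ hc

lemma Tmap_eq_smul (p : Fin (n+1) → ℝ) :
    Tmap lam Psi p = (∑ j, (lam j - gam lam Psi p) ^ 2 * p j)⁻¹ •
      fun i => (lam i - gam lam Psi p) ^ 2 * p i := by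
  ext i
  simp only [Tmap, Pi.smul_apply, smul_eq_mul]
  ring

lemma gam_Tmap {p : Fin (n+1) → ℝ} (h : ∑ j, (lam j - gam lam Psi p) ^ 2 * p j ≠ 0) :
    gam lam Psi (Tmap lam Psi p) = gam lam Psi (fun i => (lam i - gam lam Psi p) ^ 2 * p i) := by
  rw [Tmap_eq_smul, gam_smul _ _ (inv_ne_zero h)]

variable {p : Fin (n+1) → ℝ} {i₁ i₂ : Fin (n+1)}

lemma sum_mul_eq_add_of_support_pair (hne : i₁ ≠ i₂) (hzero : ∀ i, i ≠ i₁ → i ≠ i₂ → p i = 0)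
    (f : Fin (n+1) → ℝ) : ∑ i, f i * p i = f i₁ * p i₁ + f i₂ * p i₂ :=
  Fintype.sum_eq_add i₁ i₂ hne fun i hi => by rw [hzero i hi.1 hi.2, mul_zero]

lemma gam_of_support_pair (hne : i₁ ≠ i₂) (hzero : ∀ i, i ≠ i₁ → i ≠ i₂ → p i = 0) :
    gam lam Psi p = (Psi (lam i₁) * p i₁ * lam i₁ + Psi (lam i₂) * p i₂ * lam i₂) /
      (Psi (lam i₁) * p i₁ + Psi (lam i₂) * p i₂) := by
  rw [gam, sum_mul_eq_add_of_support_pair hne hzero, sum_mul_eq_add_of_support_pair hne hzero]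
  ring_nf

end Gam

theorem gam_add_gam_Tmap_general {n : ℕ} (lam : Fin (n+1) → ℝ) (Psi : ℝ → ℝ) (p : Fin (n+1) → ℝ)
    (hmono : StrictMono lam)
    (hPsi : ∀ x ∈ Set.Icc (lam 0) (lam (Fin.last n)), 0 < Psi x)
    (i₁ i₂ : Fin (n+1)) (hne : i₁ ≠ i₂)
    (h1 : 0 < p i₁) (h2 : 0 < p i₂)
    (hzero : ∀ i, i ≠ i₁ → i ≠ i₂ → p i = 0) :
    gam lam Psi p + gam lam Psi (Tmap lam Psi p) = lam i₁ + lam i₂ := by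
  have hPsi_pos : ∀ i, 0 < Psi (lam i) := fun i =>
    hPsi _ ⟨hmono.monotone (Fin.zero_le i), hmono.monotone (Fin.le_last i)⟩
  have ha : 0 < Psi (lam i₁) * p i₁ := mul_pos (hPsi_pos i₁) h1
  have hb : 0 < Psi (lam i₂) * p i₂ := mul_pos (hPsi_pos i₂) h2
  have hlam : lam i₁ ≠ lam i₂ := hmono.injective.ne hne
  have hmean := gam_of_support_pair lam Psi hne hzero
  set γ := gam lam Psi p
  have hdev : lam i₁ - γ ≠ 0 := by
    rw [sub_twoPointMean_left (add_pos ha hb).ne' hmean]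
    have := sub_ne_zero.mpr hlam
    positivity
  have hnorm : ∑ j, (lam j - γ) ^ 2 * p j ≠ 0 := by
    rw [sum_mul_eq_add_of_support_pair hne hzero]
    positivity
  have hzeroT : ∀ i, i ≠ i₁ → i ≠ i₂ → (lam i - γ) ^ 2 * p i = 0 := fun i h h' => by
    rw [hzero i h h', mul_zero]
  rw [gam_Tmap lam Psi hnorm, gam_of_support_pair lam Psi hne hzeroT]
  calc γ + _ = γ + (lam i₁ + lam i₂ - γ) := by
        rw [← twoPointMean_of_sq_dev_weights ha.ne' hb.ne' (add_pos ha hb).ne' hlam hmean]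
        ring
    _ = lam i₁ + lam i₂ := by ring

theorem gam_add_gam_Tmap {n : ℕ} (lam : Fin (n+1) → ℝ) (Psi : ℝ → ℝ) (p : Fin (n+1) → ℝ)
    (hmono : StrictMono lam) (hpos : 0 < lam 0)
    (hPsi : ∀ x ∈ Set.Icc (lam 0) (lam (Fin.last n)), 0 < Psi x)
    (i₁ i₂ : Fin (n+1)) (hne : i₁ ≠ i₂)
    (h1 : 0 < p i₁) (h2 : 0 < p i₂) (hsum : p i₁ + p i₂ = 1)
    (hzero : ∀ i, i ≠ i₁ → i ≠ i₂ → p i = 0) :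
    gam lam Psi p + gam lam Psi (Tmap lam Psi p) = lam i₁ + lam i₂ :=
  gam_add_gam_Tmap_general lam Psi p hmono hPsi i₁ i₂ hne h1 h2 hzero
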